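/- For every reduced π-ordered BDD B over a finite set PVar of Boolean variables and Act, every bijection γ from PVar onto a set of axis-aligned predicates, and every satisfiable propositional formula φ over predicates, there exists a reduced π-ordered BDD B' over PVar and Act such that: (1) every path from the root of B' to an action node is φ-consistent with respect to γ, i.e. there is an evaluation ε with ε ⊨ φ and, for every step (d_i, b_i) of the path, ε ⊨ γ(λ(d_i)) iff b_i = 1; and (2) ⟦B'⟧(γ^ε) = ⟦B⟧(γ^ε) for every evaluation ε with ε ⊨ φ. -/

import Mathlib

/-- Comparison relations for axis-aligned predicates. -/
inductive Cmp where
  | eq | ge | gt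
deriving DecidableEq

/-- An axis-aligned predicate `x ∼ c` over variables `Var` and domain `ℚ`. -/
structure APred (Var : Type) where
  x : Var
  cmp : Cmp
  c : ℚ

/-- Satisfaction of an axis-aligned predicate by an evaluation `ε : Var → ℚ`. -/
def APred.holds {Var : Type} (ε : Var → ℚ) (p : APred Var) : Bool :=
  match p.cmp with
  | .eq => decide (ε p.x = p.c)
  | .ge => decide (p.c ≤ ε p.x)
  | .gt => decide (p.c < ε p.x)

/-- A (multi-terminal) decision diagram with decision nodes labeled by `L`
and action nodes labeled by subsets of `Act`.  A rank function ensures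
acyclicity.  Taking `L` to be a type of Boolean variables yields BDDs;
taking `L = APred Var` yields PDDs. -/
structure DD (L : Type) (Act : Type) where
  /-- the (finite) set of nodes -/
  N : Type
  fin : Fintype N
  /-- decision nodes are labeled by `Sum.inl l` with `l : L`;
  action nodes are labeled by `Sum.inr A` with `A ⊆ Act`. -/
  label : N → L ⊕ Set Act
  /-- successor function (its values on action nodes are irrelevant) -/
  succ : N → Bool → N
  root : N
  rk : N → ℕ
  rk_lt : ∀ n b l, label n = Sum.inl l → rk (succ n b) < rk n

/-- Semantics of the subdiagram rooted at `n`, given a Boolean valuation of labels. -/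
def DD.semNode {L Act : Type} (B : DD L Act) (f : L → Bool) (n : B.N) : Set Act :=
  match h : B.label n with
  | Sum.inr A => A
  | Sum.inl l => B.semNode f (B.succ n (f l))
termination_by B.rk n
decreasing_by exact B.rk_lt n (f l) l h

/-- Semantics of a decision diagram, given a Boolean valuation of its labels. -/
def DD.sem {L Act : Type} (B : DD L Act) (f : L → Bool) : Set Act :=
  B.semNode f B.root

/-- A node is a decision node iff its label is a left injection. -/
def DD.IsDecision {L Act : Type} (B : DD L Act) (n : B.N) : Prop :=
  ∃ l, B.label n = Sum.inl l

/-- `π`-orderedness: labels strictly increase (w.r.t. the ranking `π` of labels)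
along edges between decision nodes. -/
def DD.Ordered {L Act : Type} (B : DD L Act) (π : L → ℕ) : Prop :=
  ∀ n b l l', B.label n = Sum.inl l → B.label (B.succ n b) = Sum.inl l' → π l < π l'

/-- The edge relation of a decision diagram. -/
def DD.Edge {L Act : Type} (B : DD L Act) (n m : B.N) : Prop :=
  B.IsDecision n ∧ ∃ b, m = B.succ n b

/-- The set of nodes reachable from `n`. -/
def DD.Reach {L Act : Type} (B : DD L Act) (n : B.N) : Set B.N :=
  {m | Relation.ReflTransGen B.Edge n m}

/-- Isomorphism of the subdiagrams rooted at `n` and `n'`: a bijection between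
the reachable node sets mapping root to root and preserving labels and successors. -/
def DD.Iso {L Act : Type} (B : DD L Act) (n n' : B.N) : Prop :=
  ∃ φ : B.N → B.N,
    Set.BijOn φ (B.Reach n) (B.Reach n') ∧
    φ n = n' ∧
    (∀ m ∈ B.Reach n, B.label (φ m) = B.label m) ∧
    (∀ m ∈ B.Reach n, B.IsDecision m → ∀ b, φ (B.succ m b) = B.succ (φ m) b)

/-- Reducedness: every decision node is essential and no two distinct nodes
root isomorphic subdiagrams. -/
def DD.Reduced {L Act : Type} (B : DD L Act) : Prop :=
  (∀ n, B.IsDecision n → B.succ n false ≠ B.succ n true) ∧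
  (∀ n n', B.Iso n n' → n = n')

/-- Following a sequence of decision bits from a node. -/
def DD.follow {L Act : Type} (B : DD L Act) : B.N → List Bool → B.N
  | n, [] => n
  | n, b :: bs => B.follow (B.succ n b) bs

/-- `bs` encodes a path from the root to an action node: all intermediate nodes
are decision nodes and the final node is an action node. -/
def DD.IsPathToAction {L Act : Type} (B : DD L Act) (bs : List Bool) : Prop :=
  (∀ i, i < bs.length → B.IsDecision (B.follow B.root (bs.take i))) ∧
  (∃ A : Set Act, B.label (B.follow B.root bs) = Sum.inr A)

/-- Predicate decision diagrams: decision diagrams labeled by axis-aligned predicates. -/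
abbrev PDD (Var Act : Type) := DD (APred Var) Act

/-- Semantics of a PDD on an evaluation `ε : Var → ℚ`. -/
def PDD.sem {Var Act : Type} (P : PDD Var Act) (ε : Var → ℚ) : Set Act :=
  DD.sem P (fun p => p.holds ε)

/-- The path encoded by `bs` is consistent with the evaluation `ε`:
at every step, the decision bit matches the truth value of the node's predicate. -/
def PDD.PathConsistentWith {Var Act : Type} (P : PDD Var Act) (bs : List Bool)
    (ε : Var → ℚ) : Prop :=
  ∀ i, (h : i < bs.length) → ∀ p, P.label (P.follow P.root (bs.take i)) = Sum.inl p →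
    p.holds ε = bs.get ⟨i, h⟩

/-- A PDD is consistent if every path from the root to an action node is
consistent with some evaluation. -/
def PDD.Consistent {Var Act : Type} (P : PDD Var Act) : Prop :=
  ∀ bs : List Bool, P.IsPathToAction bs → ∃ ε : Var → ℚ, P.PathConsistentWith bs ε

/-- The `γ`-lifting of an evaluation `ε : Var → ℚ` to a Boolean valuation of `PVar`. -/
def liftEval {Var PVar : Type} (γ : PVar → APred Var) (ε : Var → ℚ) : PVar → Bool :=
  fun x => (γ x).holds ε

/-- The PDD `γ(B)` arising from a BDD `B` by relabeling every decision node `d`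
with the predicate `γ (λ d)`. -/
def DD.relabel {L L' Act : Type} (B : DD L Act) (γ : L → L') : DD L' Act where
  N := B.N
  fin := B.fin
  label := fun n => (B.label n).map γ id
  succ := B.succ
  root := B.root
  rk := B.rk
  rk_lt := by
    intro n b l' h
    cases hl : B.label n with
    | inl l => exact B.rk_lt n b l hl
    | inr A => simp [hl, Sum.map] at h

/-- Propositional formulas over axis-aligned predicates. -/
inductive PForm (Var : Type) where
  | tt
  | pred (p : APred Var)
  | neg (φ : PForm Var)
  | conj (φ ψ : PForm Var)

/-- Satisfaction of a propositional formula by an evaluation. -/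
def PForm.Sat {Var : Type} (ε : Var → ℚ) : PForm Var → Prop
  | .tt => True
  | .pred p => p.holds ε = true
  | .neg φ => ¬ PForm.Sat ε φ
  | .conj φ ψ => PForm.Sat ε φ ∧ PForm.Sat ε ψ

/-!
Let `S` be the set of `γ`-liftings of the evaluations satisfying `φ`. Extend `⟦B⟧` from `S` to
all valuations by precomposing it with a projection onto `S` that is greedy along the order `π`,
and take for `B'` the canonical reduced `π`-ordered BDD of this extension: its nodes are Boolean
functions and each node branches on its `π`-least essential variable. `B'` agrees with `B` on `S`
because the projection fixes `S`. Along a path of `B'`, the current node is the extension with the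
variables tested so far fixed; it branches on a variable only if both of its values are still
realised by elements of `S` compatible with the path, so every path is realised in `S`.
-/

open Function

namespace DD

variable {L Act : Type} (B : DD L Act)

theorem semNode_of_label_inr {f : L → Bool} {n : B.N} {A : Set Act}
    (hn : B.label n = .inr A) : B.semNode f n = A := by
  rw [DD.semNode]; split <;> simp_all

theorem semNode_of_label_inl {f : L → Bool} {n : B.N} {x : L} (hn : B.label n = .inl x) :
    B.semNode f n = B.semNode f (B.succ n (f x)) := by
  rw [DD.semNode]; split <;> simp_all

theorem semNode_eq_of_iso {n n' : B.N} (hiso : B.Iso n n') (f : L → Bool) :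
    B.semNode f n = B.semNode f n' := by
  obtain ⟨ψ, -, rfl, hlabel, hsucc⟩ := hiso
  suffices ∀ m ∈ B.Reach n, B.semNode f m = B.semNode f (ψ m) from
    this n Relation.ReflTransGen.refl
  intro m
  induction m using (measure B.rk).wf.induction with
  | h m ih =>
    intro hm
    cases hl : B.label m with
    | inr A =>
      rw [B.semNode_of_label_inr hl, B.semNode_of_label_inr ((hlabel m hm).trans hl)]
    | inl x =>
      rw [B.semNode_of_label_inl hl, B.semNode_of_label_inl ((hlabel m hm).trans hl),
        ← hsucc m hm ⟨x, hl⟩]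
      exact ih _ (B.rk_lt m _ x hl) (hm.tail ⟨⟨x, hl⟩, _, rfl⟩)

def IsPathFrom (n : B.N) (bs : List Bool) : Prop :=
  (∀ i, i < bs.length → B.IsDecision (B.follow n (bs.take i))) ∧
  ∃ A : Set Act, B.label (B.follow n bs) = Sum.inr A

def ConsistentFrom (S : Set (L → Bool)) (n : B.N) : Prop :=
  ∀ bs, B.IsPathFrom n bs → ∃ τ ∈ S, ∀ i (h : i < bs.length) (x : L),
    B.label (B.follow n (bs.take i)) = Sum.inl x → τ x = bs.get ⟨i, h⟩

variable {B} in
theorem ConsistentFrom.mono {S S' : Set (L → Bool)} {n : B.N} (h : B.ConsistentFrom S n)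
    (hSS' : S ⊆ S') : B.ConsistentFrom S' n := fun bs hbs =>
  let ⟨τ, hτ, hpath⟩ := h bs hbs
  ⟨τ, hSS' hτ, hpath⟩

theorem consistentFrom_of_label_inr {S : Set (L → Bool)} {n : B.N} {A : Set Act}
    (hn : B.label n = .inr A) (hS : S.Nonempty) : B.ConsistentFrom S n := by
  rintro bs ⟨hdec, -⟩
  obtain ⟨τ, hτ⟩ := hS
  refine ⟨τ, hτ, fun i hi _ _ => ?_⟩
  obtain ⟨y, hy⟩ := hdec 0 (by omega)
  simp [DD.follow, hn] at hy

theorem consistentFrom_of_label_inl {S : Set (L → Bool)} {n : B.N} {x : L}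
    (hn : B.label n = .inl x)
    (hsucc : ∀ b, B.ConsistentFrom {τ ∈ S | τ x = b} (B.succ n b)) :
    B.ConsistentFrom S n := by
  rintro (_ | ⟨b, bs⟩) ⟨hdec, hact⟩
  · obtain ⟨A, hA⟩ := hact
    simp [DD.follow, hn] at hA
  · obtain ⟨τ, ⟨hτS, hτx⟩, hτ⟩ :=
      hsucc b bs ⟨fun i hi => hdec (i + 1) (by simpa using hi), hact⟩
    refine ⟨τ, hτS, ?_⟩
    rintro (_ | i) hi y hy
    · obtain rfl : x = y := by simpa [DD.follow, hn] using hy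
      exact hτx
    · exact hτ i (by simpa using hi) y hy

end DD

section BooleanFunctions

variable {V β : Type*}

def Essential (h : (V → Bool) → β) (x : V) : Prop :=
  ¬ DependsOn h {x}ᶜ

theorem Essential.mem_of_dependsOn {h : (V → Bool) → β} {s : Set V} {x : V}
    (hx : Essential h x) (hs : DependsOn h s) : x ∈ s := by
  by_contra hxs
  exact hx (hs.mono (Set.subset_compl_singleton_iff.mpr hxs))

variable [DecidableEq V]

def cofactor (h : (V → Bool) → β) (x : V) (b : Bool) : (V → Bool) → β :=
  fun η => h (update η x b)

variable {h : (V → Bool) → β} {s : Set V} {x y : V}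

theorem dependsOn_cofactor (hs : DependsOn h s) (x : V) (b : Bool) :
    DependsOn (cofactor h x b) (s \ {x}) := by
  intro η η' hη
  apply hs
  intro y hy
  rcases eq_or_ne y x with rfl | hyx
  · simp
  · simp [update_of_ne hyx, hη y ⟨hy, hyx⟩]

theorem Essential.of_cofactor {b : Bool} (hy : Essential (cofactor h x b) y) :
    Essential h y ∧ y ≠ x := by
  refine ⟨fun hdep => hy ((dependsOn_cofactor hdep x b).mono Set.sdiff_subset), ?_⟩
  rintro rfl
  exact hy (Set.compl_eq_univ_sdiff {y} ▸ dependsOn_cofactor (dependsOn_univ h) y b)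

theorem cofactor_eq_self (hx : ¬ Essential h x) (b : Bool) : cofactor h x b = h :=
  funext fun _ => (not_not.mp hx) fun _ hy => update_of_ne hy _ _

theorem Essential.cofactor_ne (hx : Essential h x) (b : Bool) :
    cofactor h x b ≠ cofactor h x (!b) := by
  intro heq
  have hcof : ∀ c, cofactor h x c = cofactor h x b := by
    intro c
    cases c <;> cases b <;> simp_all
  apply hx
  intro η η' hη
  have hupd : update η x (η' x) = η' := by
    funext y
    rcases eq_or_ne y x with rfl | hyx
    · simp
    · simp [update_of_ne hyx, hη y hyx]
  calc h η = cofactor h x (η x) η := by simp [cofactor]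
    _ = cofactor h x (η' x) η := by rw [hcof (η x), hcof (η' x)]
    _ = h η' := by rw [cofactor, hupd]

theorem DependsOn.diff_singleton (hs : DependsOn h s) (hx : ¬ Essential h x) :
    DependsOn h (s \ {x}) := by
  intro η η' hη
  calc h η = cofactor h x (η' x) η := by rw [cofactor_eq_self hx]
    _ = h η' := hs fun y hy => by
      rcases eq_or_ne y x with rfl | hyx
      · simp
      · simp [update_of_ne hyx, hη y ⟨hy, hyx⟩]

theorem dependsOn_setOf_essential [Finite V] (h : (V → Bool) → β) :
    DependsOn h {x | Essential h x} := by
  have key : ∀ t : Finset V, (∀ x ∈ t, ¬ Essential h x) → DependsOn h (↑t)ᶜ := by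
    intro t
    induction t using Finset.induction_on with
    | empty => simpa using dependsOn_univ h
    | insert a t _ ih =>
      intro ht
      refine ((ih fun y hy => ht y (by simp [hy])).diff_singleton (ht a (by simp))).mono ?_
      intro y hy
      simp_all
  classical
  have := Fintype.ofFinite V
  simpa [Set.compl_ofPred] using key {x | Essential h x}ᶜ.toFinset (by simp)

end BooleanFunctions

section Canonical

variable {PVar Act : Type} [DecidableEq PVar] [Finite PVar] [Finite Act]

open Classical in
/-- The canonical `π`-ordered BDD: its nodes are all Boolean functions, a node branches on its
`π`-least essential variable, and its successors are the two cofactors there. -/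
noncomputable def canonicalBDD (π : PVar → ℕ) (r : (PVar → Bool) → Set Act) :
    DD PVar Act where
  N := (PVar → Bool) → Set Act
  fin := Fintype.ofFinite _
  label h :=
    if hne : {x | Essential h x}.Nonempty then .inl (argminOn π _ hne)
    else .inr (h fun _ => false)
  succ h b :=
    if hne : {x | Essential h x}.Nonempty then cofactor h (argminOn π _ hne) b else h
  root := r
  rk h := {x | Essential h x}.ncard
  rk_lt := by
    intro h b x hx
    have hne : {x | Essential h x}.Nonempty := by
      by_contra hne
      simp [hne] at hx
    simp only [hne, dif_pos]
    refine Set.ncard_lt_ncard ⟨fun y hy => (Essential.of_cofactor hy).1, fun hsub => ?_⟩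
    exact (Essential.of_cofactor (hsub (argminOn_mem π _ hne))).2 rfl

variable (π : PVar → ℕ) (r : (PVar → Bool) → Set Act)

theorem canonicalBDD_label_spec {h : (PVar → Bool) → Set Act} {x : PVar}
    (hx : (canonicalBDD π r).label h = .inl x) :
    Essential h x ∧ ∀ y, Essential h y → π x ≤ π y := by
  have hne : {x | Essential h x}.Nonempty := by
    by_contra hne
    simp [canonicalBDD, hne] at hx
  simp only [canonicalBDD, hne, dif_pos, Sum.inl.injEq] at hx
  subst hx
  exact ⟨argminOn_mem π _ hne, fun y hy => argminOn_le π _ hy⟩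

theorem canonicalBDD_label_of_essential (hπ : Injective π) {h : (PVar → Bool) → Set Act}
    {x : PVar} (hx : Essential h x) (hmin : ∀ y, Essential h y → π x ≤ π y) :
    (canonicalBDD π r).label h = .inl x := by
  have hne : {x | Essential h x}.Nonempty := ⟨x, hx⟩
  simp only [canonicalBDD, hne, dif_pos, Sum.inl.injEq]
  exact hπ (le_antisymm (argminOn_le π _ hx) (hmin _ (argminOn_mem π _ hne)))

theorem canonicalBDD_succ_of_label {h : (PVar → Bool) → Set Act} {x : PVar}
    (hx : (canonicalBDD π r).label h = .inl x) (b : Bool) :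
    (canonicalBDD π r).succ h b = cofactor h x b := by
  have hne : {x | Essential h x}.Nonempty := by
    by_contra hne
    simp [canonicalBDD, hne] at hx
  simp only [canonicalBDD, hne, dif_pos, Sum.inl.injEq] at hx ⊢
  rw [hx]

theorem canonicalBDD_apply_of_label_inr {h : (PVar → Bool) → Set Act} {A : Set Act}
    (hA : (canonicalBDD π r).label h = .inr A) (η : PVar → Bool) : h η = A := by
  have hne : ¬ {x | Essential h x}.Nonempty := by
    intro hne
    simp [canonicalBDD, hne] at hA
  simp only [canonicalBDD, hne, dif_neg, not_false_eq_true, Sum.inr.injEq] at hA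
  have hdep := dependsOn_setOf_essential h
  rw [Set.not_nonempty_iff_eq_empty.mp hne] at hdep
  rw [← hA]
  exact hdep.empty _ _

theorem canonicalBDD_semNode (f : PVar → Bool) (h : (PVar → Bool) → Set Act) :
    (canonicalBDD π r).semNode f h = h f := by
  induction h using (measure (canonicalBDD π r).rk).wf.induction with
  | h h ih =>
    cases hl : (canonicalBDD π r).label h with
    | inl x =>
      rw [DD.semNode_of_label_inl _ hl, ih _ ((canonicalBDD π r).rk_lt h _ x hl),
        canonicalBDD_succ_of_label π r hl]
      simp [cofactor]
    | inr A => rw [DD.semNode_of_label_inr _ hl, canonicalBDD_apply_of_label_inr π r hl]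

theorem canonicalBDD_sem (f : PVar → Bool) : (canonicalBDD π r).sem f = r f :=
  canonicalBDD_semNode π r f r

theorem canonicalBDD_reduced : (canonicalBDD π r).Reduced := by
  refine ⟨fun h ⟨x, hx⟩ => ?_, fun h h' hiso => funext fun f => ?_⟩
  · rw [canonicalBDD_succ_of_label π r hx, canonicalBDD_succ_of_label π r hx]
    exact (canonicalBDD_label_spec π r hx).1.cofactor_ne false
  · rw [← canonicalBDD_semNode π r f h, ← canonicalBDD_semNode π r f h']
    exact DD.semNode_eq_of_iso _ hiso f

theorem canonicalBDD_ordered (hπ : Injective π) : (canonicalBDD π r).Ordered π := by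
  intro h b x y hx hy
  rw [canonicalBDD_succ_of_label π r hx] at hy
  obtain ⟨hess, hyx⟩ := (canonicalBDD_label_spec π r hy).1.of_cofactor
  exact lt_of_le_of_ne ((canonicalBDD_label_spec π r hx).2 y hess) (hπ.ne hyx.symm)

end Canonical

section GreedyProjection

variable {V : Type*}

open Classical in
noncomputable def greedyBit (S : Set (V → Bool)) (x : V) (c : Bool) : Bool :=
  if ∃ τ ∈ S, τ x = c then c else !c

theorem greedyBit_of_exists {S : Set (V → Bool)} {x : V} {c : Bool} (h : ∃ τ ∈ S, τ x = c) :
    greedyBit S x c = c := by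
  simp [greedyBit, h]

theorem greedyBit_of_not_exists {S : Set (V → Bool)} {x : V} {c : Bool}
    (h : ¬ ∃ τ ∈ S, τ x = c) : greedyBit S x c = !c := by
  simp only [greedyBit, if_neg h]

variable [DecidableEq V]

/-- A projection towards `S` that is greedy along `l`: it keeps the value of each variable in
turn as long as this is compatible with some element of `S`. -/
noncomputable def greedyProj : Set (V → Bool) → List V → (V → Bool) → V → Bool
  | _, [], η => η
  | S, x :: l, η =>
    greedyProj {τ ∈ S | τ x = greedyBit S x (η x)} l (update η x (greedyBit S x (η x)))

theorem greedyProj_of_mem {S : Set (V → Bool)} (l : List V) {η : V → Bool} (hη : η ∈ S) :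
    greedyProj S l η = η := by
  induction l generalizing S with
  | nil => rfl
  | cons x l ih =>
    simp only [greedyProj, greedyBit_of_exists ⟨η, hη, rfl⟩, update_eq_self]
    exact ih ⟨hη, rfl⟩

theorem greedyProj_update_of_not_mem (S : Set (V → Bool)) {l : List V} {y : V} (hy : y ∉ l)
    (η : V → Bool) (c : Bool) :
    greedyProj S l (update η y c) = update (greedyProj S l η) y c := by
  induction l generalizing S η with
  | nil => rfl
  | cons x l ih =>
    have hyx : y ≠ x := fun h => hy (h ▸ List.mem_cons_self)
    simp only [greedyProj, update_of_ne hyx.symm]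
    rw [update_comm hyx, ih _ (fun h => hy (List.mem_cons_of_mem x h))]

theorem greedyProj_eqOn (S : Set (V → Bool)) {l : List V} {T : Set V} (hl : ∀ x ∈ l, x ∈ T)
    {η η' : V → Bool} (hη : Set.EqOn η η' T) :
    Set.EqOn (greedyProj S l η) (greedyProj S l η') T := by
  induction l generalizing S η η' with
  | nil => exact hη
  | cons x l ih =>
    have hx : η x = η' x := hη (hl x List.mem_cons_self)
    simp only [greedyProj, hx]
    refine ih _ (fun y hy => hl y (List.mem_cons_of_mem x hy)) fun y hy => ?_
    rcases eq_or_ne y x with rfl | hyx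
    · simp
    · simp [update_of_ne hyx, hη hy]

theorem DependsOn.comp_greedyProj {β : Type*} {f : (V → Bool) → β} {s : Set V}
    (hf : DependsOn f s) (S : Set (V → Bool)) (l : List V) :
    DependsOn (f ∘ greedyProj S l) (s ∪ {x | x ∈ l}) := fun _ _ hη =>
  hf fun _ hy => greedyProj_eqOn S (fun _ hx => .inr hx) hη (.inl hy)

theorem greedyProj_cons_update {S : Set (V → Bool)} {x : V} {b : Bool}
    (hb : ∃ τ ∈ S, τ x = b) (hnb : ¬ ∃ τ ∈ S, τ x = !b) (l : List V) (η : V → Bool)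
    (c : Bool) :
    greedyProj S (x :: l) (update η x c) = greedyProj {τ ∈ S | τ x = b} l (update η x b) := by
  have hbit : greedyBit S x c = b := by
    rcases Bool.eq_or_eq_not c b with rfl | rfl
    · exact greedyBit_of_exists hb
    · rw [greedyBit_of_not_exists hnb, Bool.not_not]
  simp only [greedyProj, update_self, hbit, update_idem]

theorem cofactor_comp_greedyProj_cons {β : Type*} (f : (V → Bool) → β) {S : Set (V → Bool)}
    {x : V} {l : List V} (hx : x ∉ l) {b : Bool} (hb : ∃ τ ∈ S, τ x = b) :
    cofactor (f ∘ greedyProj S (x :: l)) x b =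
      cofactor f x b ∘ greedyProj {τ ∈ S | τ x = b} l := by
  funext η
  simp only [cofactor, comp_apply, greedyProj, update_self, greedyBit_of_exists hb, update_idem,
    greedyProj_update_of_not_mem _ hx]

/-- If `S` realised only one value of `x`, `greedyProj` would overwrite `x` with it. -/
theorem exists_apply_eq_of_essential_comp_greedyProj {β : Type*} {f : (V → Bool) → β}
    {S : Set (V → Bool)} (hS : S.Nonempty) {x : V} {l : List V}
    (hx : Essential (f ∘ greedyProj S (x :: l)) x) (b : Bool) : ∃ τ ∈ S, τ x = b := by
  by_contra hb
  obtain ⟨τ, hτ⟩ := hS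
  have hnb : ∃ τ ∈ S, τ x = !b := ⟨τ, hτ, Bool.eq_not.mpr fun h => hb ⟨τ, hτ, h⟩⟩
  refine hx.cofactor_ne (!b) (funext fun η => ?_)
  simp only [cofactor, comp_apply, greedyProj_cons_update hnb (by simpa using hb)]

end GreedyProjection

theorem exists_list_mem_pairwise_lt {V : Type*} [Fintype V] {π : V → ℕ} (hπ : Injective π) :
    ∃ l : List V, (∀ x, x ∈ l) ∧ l.Pairwise (π · < π ·) := by
  let l := Finset.univ.toList.mergeSort (fun x y => decide (π x ≤ π y))
  have hle : l.Pairwise (fun x y => decide (π x ≤ π y)) :=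
    List.pairwise_mergeSort (by simpa using fun _ _ _ => le_trans)
      (by simpa using fun _ _ => le_total _ _) _
  have hnodup : l.Nodup := (List.mergeSort_perm _ _).nodup_iff.mpr (Finset.nodup_toList _)
  refine ⟨l, fun x => by simp [l], (hle.and hnodup).imp fun ⟨hxy, hne⟩ => ?_⟩
  exact lt_of_le_of_ne (by simpa using hxy) (hπ.ne hne)

section PathConsistency

variable {PVar Act : Type} [DecidableEq PVar] [Finite PVar] [Finite Act] {π : PVar → ℕ}

theorem consistentFrom_canonicalBDD_comp_greedyProj (hπ : Injective π)
    (r : (PVar → Bool) → Set Act) :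
    ∀ (l : List PVar), l.Pairwise (π · < π ·) → ∀ (S : Set (PVar → Bool))
      (f : (PVar → Bool) → Set Act), S.Nonempty → DependsOn f {x | x ∈ l} →
      (canonicalBDD π r).ConsistentFrom S (f ∘ greedyProj S l)
  | [], _, S, f, hS, hf => by
    cases hlabel : (canonicalBDD π r).label (f ∘ greedyProj S []) with
    | inl x =>
      have := (canonicalBDD_label_spec π r hlabel).1.mem_of_dependsOn (hf.comp_greedyProj S [])
      simp at this
    | inr A => exact DD.consistentFrom_of_label_inr _ hlabel hS
  | x :: l, hsorted, S, f, hS, hf => by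
    rw [List.pairwise_cons] at hsorted
    have hxl : x ∉ l := fun hx => lt_irrefl _ (hsorted.1 x hx)
    have hcof : ∀ b, (∃ τ ∈ S, τ x = b) →
        (canonicalBDD π r).ConsistentFrom {τ ∈ S | τ x = b}
          (cofactor (f ∘ greedyProj S (x :: l)) x b) := by
      intro b hb
      rw [cofactor_comp_greedyProj_cons f hxl hb]
      refine consistentFrom_canonicalBDD_comp_greedyProj hπ r l hsorted.2 _ _ hb ?_
      refine (dependsOn_cofactor hf x b).mono fun y hy => ?_
      exact (List.mem_cons.mp hy.1).resolve_left hy.2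
    by_cases hx : Essential (f ∘ greedyProj S (x :: l)) x
    · have hlabel : (canonicalBDD π r).label (f ∘ greedyProj S (x :: l)) = .inl x := by
        refine canonicalBDD_label_of_essential π r hπ hx fun y hy => ?_
        have := hy.mem_of_dependsOn (hf.comp_greedyProj S (x :: l))
        simp only [Set.mem_union, Set.mem_ofPred_eq, or_self, List.mem_cons] at this
        rcases this with rfl | hy
        · exact le_rfl
        · exact (hsorted.1 y hy).le
      refine DD.consistentFrom_of_label_inl _ hlabel fun b => ?_
      rw [canonicalBDD_succ_of_label π r hlabel]
      exact hcof b (exists_apply_eq_of_essential_comp_greedyProj hS hx b)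
    · obtain ⟨τ, hτ⟩ := hS
      rw [← cofactor_eq_self hx (τ x)]
      exact (hcof _ ⟨τ, hτ, rfl⟩).mono (Set.sep_subset _ _)

end PathConsistency

theorem phi_consistency_general
    {Var PVar Act : Type} [Fintype PVar] [Fintype Act]
    (B : DD PVar Act) (π : PVar → ℕ) (hπ : Function.Injective π)
    (γ : PVar → APred Var)
    (φ : PForm Var) (hφ : ∃ ε : Var → ℚ, PForm.Sat ε φ) :
    ∃ B' : DD PVar Act, B'.Reduced ∧ B'.Ordered π ∧
      (∀ bs : List Bool, B'.IsPathToAction bs →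
        ∃ ε : Var → ℚ, PForm.Sat ε φ ∧
          ∀ i, (h : i < bs.length) → ∀ x : PVar,
            B'.label (B'.follow B'.root (bs.take i)) = Sum.inl x →
              (γ x).holds ε = bs.get ⟨i, h⟩) ∧
      (∀ ε : Var → ℚ, PForm.Sat ε φ →
        B'.sem (liftEval γ ε) = B.sem (liftEval γ ε)) := by
  classical
  obtain ⟨l, hl, hsorted⟩ := exists_list_mem_pairwise_lt hπ
  let S := liftEval γ '' {ε | PForm.Sat ε φ}
  let B' := canonicalBDD π (B.sem ∘ greedyProj S l)
  refine ⟨B', canonicalBDD_reduced π _, canonicalBDD_ordered π _ hπ, fun bs hbs => ?_,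
    fun ε hε => ?_⟩
  · have hS : S.Nonempty := Set.Nonempty.image _ hφ
    have hdep : DependsOn B.sem {x | x ∈ l} := by simpa [hl] using dependsOn_univ B.sem
    obtain ⟨_, ⟨ε, hε, rfl⟩, hpath⟩ :=
      consistentFrom_canonicalBDD_comp_greedyProj hπ _ l hsorted S B.sem hS hdep bs hbs
    exact ⟨ε, hε, hpath⟩
  · rw [canonicalBDD_sem, comp_apply, greedyProj_of_mem (S := S) l ⟨ε, hε, rfl⟩]

/-- For every reduced `π`-ordered BDD `B`, bijection `γ` from
`PVar` onto predicates, and satisfiable formula `φ`, there is a reduced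
`π`-ordered BDD `B'` all of whose root-to-action paths are `φ`-consistent
w.r.t. `γ` and which agrees with `B` on all lifted evaluations satisfying `φ`. -/
theorem phi_consistency
    {Var PVar Act : Type} [Countable Var] [Fintype PVar] [Fintype Act]
    (B : DD PVar Act) (π : PVar → ℕ) (hπ : Function.Injective π)
    (hred : B.Reduced) (hord : B.Ordered π)
    (γ : PVar → APred Var) (hγ : Function.Injective γ)
    (φ : PForm Var) (hφ : ∃ ε : Var → ℚ, PForm.Sat ε φ) :
    ∃ B' : DD PVar Act, B'.Reduced ∧ B'.Ordered π ∧
      (∀ bs : List Bool, B'.IsPathToAction bs →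
        ∃ ε : Var → ℚ, PForm.Sat ε φ ∧
          ∀ i, (h : i < bs.length) → ∀ x : PVar,
            B'.label (B'.follow B'.root (bs.take i)) = Sum.inl x →
              (γ x).holds ε = bs.get ⟨i, h⟩) ∧
      (∀ ε : Var → ℚ, PForm.Sat ε φ →
        B'.sem (liftEval γ ε) = B.sem (liftEval γ ε)) :=
  phi_consistency_general B π hπ γ φ hφ
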